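/- Let k be a real 3×3 matrix with kᵀΛk = Λ and det k = 1 (i.e. k ∈ K), and suppose the first column of k equals (v, 0, 0)ᵀ for some v ∈ ℝ. Then v ≠ 0 and there exists a unique a ∈ ℝ such that k = [[v, a, a²/(2v)], [0, 1, a/v], [0, 0, 1/v]]. Conversely, for every v ∈ ℝ with v ≠ 0 and every a ∈ ℝ, the matrix [[v, a, a²/(2v)], [0, 1, a/v], [0, 0, 1/v]] satisfies kᵀΛk = Λ, det k = 1, and has first column (v,0,0)ᵀ. -/

import Mathlib

open Matrix

/-- The bilinear form of the light cone: `Λ = [[0,0,−1],[0,1,0],[−1,0,0]]`. -/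
def lightConeLambda : Matrix (Fin 3) (Fin 3) ℝ := !![0, 0, -1; 0, 1, 0; -1, 0, 0]

/-- The matrix `[[v, a, a²/(2v)], [0, 1, a/v], [0, 0, 1/v]]`. -/
noncomputable def isotropyMat (v a : ℝ) : Matrix (Fin 3) (Fin 3) ℝ :=
  !![v, a, a ^ 2 / (2 * v); 0, 1, a / v; 0, 0, 1 / v]

/-!
The conditions `kᵀΛk = Λ` say that the columns `c₀, c₁, c₂` of `k` satisfy
`⟨cᵢ, cⱼ⟩ = Λᵢⱼ` for the form `⟨x, y⟩ = x₁y₁ - x₀y₂ - x₂y₀`. With `c₀ = v e₀`, the entries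
`(0,1)` and `(0,2)` force `k₂₁ = 0` and `k₂₂ = 1/v`; the determinant, now the product of the
diagonal, gives `k₁₁ = 1`; and the entries `(1,2)`, `(2,2)` express `k₁₂`, `k₀₂` through
`a := k₀₁`.
-/

theorem transpose_mul_lightConeLambda_mul_apply (k : Matrix (Fin 3) (Fin 3) ℝ) (i j : Fin 3) :
    (kᵀ * lightConeLambda * k) i j = k 1 i * k 1 j - k 0 i * k 2 j - k 2 i * k 0 j := by
  simp only [lightConeLambda, mul_apply, transpose_apply, of_apply, cons_val', cons_val_fin_one,
    Fin.sum_univ_three, cons_val_zero, cons_val_one, cons_val, mul_zero, add_zero, mul_neg,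
    mul_one, zero_add, neg_mul]
  ring

theorem isotropyMat_apply_zero_one (v a : ℝ) : isotropyMat v a 0 1 = a := rfl

theorem isotropyMat_injective (v : ℝ) : Function.Injective (isotropyMat v) := fun a b h => by
  rw [← isotropyMat_apply_zero_one v a, h, isotropyMat_apply_zero_one]

theorem transpose_isotropyMat_mul_lightConeLambda_mul {v : ℝ} (hv : v ≠ 0) (a : ℝ) :
    (isotropyMat v a)ᵀ * lightConeLambda * isotropyMat v a = lightConeLambda := by
  ext i j
  rw [transpose_mul_lightConeLambda_mul_apply]
  fin_cases i <;> fin_cases j <;> simp [isotropyMat, lightConeLambda] <;> field_simp <;> ring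

theorem det_isotropyMat {v : ℝ} (hv : v ≠ 0) (a : ℝ) : (isotropyMat v a).det = 1 := by
  simp [isotropyMat, det_fin_three, hv]

theorem eq_isotropyMat_of_lightCone_isotropy {k : Matrix (Fin 3) (Fin 3) ℝ} {v : ℝ}
    (hK : kᵀ * lightConeLambda * k = lightConeLambda) (hdet : k.det = 1)
    (h00 : k 0 0 = v) (h10 : k 1 0 = 0) (h20 : k 2 0 = 0) :
    v ≠ 0 ∧ k = isotropyMat v (k 0 1) := by
  have form (i j : Fin 3) :
      k 1 i * k 1 j - k 0 i * k 2 j - k 2 i * k 0 j = lightConeLambda i j := by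
    rw [← transpose_mul_lightConeLambda_mul_apply, hK]
  have e01 : k 1 0 * k 1 1 - k 0 0 * k 2 1 - k 2 0 * k 0 1 = 0 := form 0 1
  have e02 : k 1 0 * k 1 2 - k 0 0 * k 2 2 - k 2 0 * k 0 2 = -1 := form 0 2
  have e12 : k 1 1 * k 1 2 - k 0 1 * k 2 2 - k 2 1 * k 0 2 = 0 := form 1 2
  have e22 : k 1 2 * k 1 2 - k 0 2 * k 2 2 - k 2 2 * k 0 2 = 0 := form 2 2
  rw [h00, h10, h20] at e01 e02
  have hv : v ≠ 0 := by rintro rfl; norm_num at e02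
  have h21 : k 2 1 = 0 := by
    have : v * k 2 1 = 0 := by linarith
    exact (mul_eq_zero.1 this).resolve_left hv
  have h22 : k 2 2 = 1 / v := by field_simp; linarith
  have h11 : k 1 1 = 1 := by
    have hdiag : v * k 1 1 * k 2 2 = 1 := by
      rw [det_fin_three, h00, h10, h20, h21] at hdet; linarith
    rw [h22] at hdiag; field_simp at hdiag; linarith
  have h12 : k 1 2 = k 0 1 / v := by
    rw [h11, h21, h22] at e12; field_simp at e12 ⊢; linarith
  have h02 : k 0 2 = k 0 1 ^ 2 / (2 * v) := by
    rw [h12, h22] at e22; field_simp at e22 ⊢; linarith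
  refine ⟨hv, ?_⟩
  ext i j
  fin_cases i <;> fin_cases j <;> simp [isotropyMat, h00, h10, h20, h21, h11, h22, h12, h02]

/-- The elements of `K = {k : kᵀΛk = Λ, det k = 1}` whose first column is `(v,0,0)ᵀ`
are exactly the matrices `[[v, a, a²/(2v)], [0, 1, a/v], [0, 0, 1/v]]` with `v ≠ 0`,
`a ∈ ℝ`, `a` being uniquely determined. -/
theorem isotropy_elements_of_K :
    (∀ (k : Matrix (Fin 3) (Fin 3) ℝ) (v : ℝ),
      kᵀ * lightConeLambda * k = lightConeLambda → k.det = 1 →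
      k 0 0 = v → k 1 0 = 0 → k 2 0 = 0 →
      v ≠ 0 ∧ ∃! a : ℝ, k = isotropyMat v a) ∧
    (∀ v : ℝ, v ≠ 0 → ∀ a : ℝ,
      (isotropyMat v a)ᵀ * lightConeLambda * isotropyMat v a = lightConeLambda ∧
      (isotropyMat v a).det = 1 ∧
      isotropyMat v a 0 0 = v ∧ isotropyMat v a 1 0 = 0 ∧ isotropyMat v a 2 0 = 0) := by
  refine ⟨fun k v hK hdet h00 h10 h20 => ?_, fun v hv a => ?_⟩
  · obtain ⟨hv, hk⟩ := eq_isotropyMat_of_lightCone_isotropy hK hdet h00 h10 h20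
    exact ⟨hv, k 0 1, hk, fun a ha => isotropyMat_injective v (ha.symm.trans hk)⟩
  · exact ⟨transpose_isotropyMat_mul_lightConeLambda_mul hv a, det_isotropyMat hv a,
      rfl, rfl, rfl⟩
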